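/- Let S, Ŝ, W be symmetric positive definite n×n real matrices satisfying S ≤ C·Ŝ, S ≤ D·W, and e·W ≤ Ŝ with positive constants C, D, e. For γ ≥ 0, define S_γ := (S⁻¹ + γW⁻¹)⁻¹ and Ŝ_γ := (Ŝ⁻¹ + γW⁻¹)⁻¹. Then every eigenvalue λ of Ŝ_γ⁻¹ S_γ satisfies λ ≤ C/(1 + γ·C·e) + γ·D/(1 + γ·D). -/

import Mathlib

/-!
Put `z := M⁻¹ x` with `M := S⁻¹ + γ W⁻¹`. The eigen-equation becomes `N z = λ M z` with
`N := Ŝ⁻¹ + γ W⁻¹`, so `λ = (b + γ w) / (a + γ w)` for the quadratic forms `a, b, w` of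
`S⁻¹, Ŝ⁻¹, W⁻¹` at `z`. Inverting the three Loewner inequalities gives `b ≤ C a`, `w ≤ D a`
and `e b ≤ w`, and splitting the quotient into `b / (a + γ w)` and `γ w / (a + γ w)` bounds
each part by the corresponding term.
-/

open Matrix

namespace Matrix

variable {ι : Type*} [Fintype ι] {A B : Matrix ι ι ℝ}

lemma IsHermitian.dotProduct_mulVec_comm (hA : A.IsHermitian) (u v : ι → ℝ) :
    u ⬝ᵥ A *ᵥ v = v ⬝ᵥ A *ᵥ u := by
  rw [dotProduct_mulVec, ← mulVec_transpose, ← conjTranspose_eq_transpose_of_trivial, hA,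
    dotProduct_comm]

variable [DecidableEq ι]

lemma mulVec_inv_mulVec (hA : IsUnit A.det) (x : ι → ℝ) : A *ᵥ (A⁻¹ *ᵥ x) = x := by
  rw [mulVec_mulVec, mul_nonsing_inv _ hA, one_mulVec]

lemma PosDef.dotProduct_inv_mulVec_anti (hA : A.PosDef) (hB : B.PosDef)
    (h : ∀ x, x ⬝ᵥ A *ᵥ x ≤ x ⬝ᵥ B *ᵥ x) (z : ι → ℝ) :
    z ⬝ᵥ B⁻¹ *ᵥ z ≤ z ⬝ᵥ A⁻¹ *ᵥ z := by
  set u := B⁻¹ *ᵥ z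
  set w := A⁻¹ *ᵥ z
  have hBu : B *ᵥ u = z := mulVec_inv_mulVec hB.det_pos.ne'.isUnit z
  have hAw : A *ᵥ w = z := mulVec_inv_mulVec hA.det_pos.ne'.isUnit z
  -- `0 ≤ (u - w)ᵀ A (u - w) ≤ uᵀ B u - 2 uᵀ z + wᵀ z = wᵀ z - uᵀ z`
  have hnonneg := hA.posSemidef.dotProduct_mulVec_nonneg (u - w)
  have hAu := h u
  rw [hBu] at hAu
  have hsymm := hA.isHermitian.dotProduct_mulVec_comm u w
  simp only [star_trivial, mulVec_sub, dotProduct_sub, sub_dotProduct, hAw] at hnonneg hsymm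
  rw [dotProduct_comm z u, dotProduct_comm z w]
  linarith

lemma PosDef.smul_dotProduct_inv_mulVec_anti (hA : A.PosDef) (hB : B.PosDef) {c d : ℝ}
    (hc : 0 < c) (hd : 0 < d) (h : ∀ x, c * (x ⬝ᵥ A *ᵥ x) ≤ d * (x ⬝ᵥ B *ᵥ x)) (z : ι → ℝ) :
    c * (z ⬝ᵥ B⁻¹ *ᵥ z) ≤ d * (z ⬝ᵥ A⁻¹ *ᵥ z) := by
  have key := (hA.smul hc).dotProduct_inv_mulVec_anti (hB.smul hd)
    (fun x => by simpa only [smul_mulVec, dotProduct_smul, smul_eq_mul] using h x) z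
  have := invertibleOfNonzero hc.ne'
  have := invertibleOfNonzero hd.ne'
  rw [inv_smul _ c hA.det_pos.ne'.isUnit, inv_smul _ d hB.det_pos.ne'.isUnit] at key
  simp only [invOf_eq_inv, smul_mulVec, dotProduct_smul, smul_eq_mul] at key
  calc c * (z ⬝ᵥ B⁻¹ *ᵥ z) = c * d * (d⁻¹ * (z ⬝ᵥ B⁻¹ *ᵥ z)) := by field_simp
    _ ≤ c * d * (c⁻¹ * (z ⬝ᵥ A⁻¹ *ᵥ z)) := by gcongr
    _ = d * (z ⬝ᵥ A⁻¹ *ᵥ z) := by field_simp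

lemma dotProduct_mulVec_eq_of_mul_inv_mulVec_eq {M N : Matrix ι ι ℝ} (hM : IsUnit M.det)
    {lam : ℝ} {x : ι → ℝ} (h : (N * M⁻¹) *ᵥ x = lam • x) :
    (M⁻¹ *ᵥ x) ⬝ᵥ N *ᵥ (M⁻¹ *ᵥ x) = lam * ((M⁻¹ *ᵥ x) ⬝ᵥ M *ᵥ (M⁻¹ *ᵥ x)) := by
  rw [mulVec_mulVec, h, mulVec_inv_mulVec hM, dotProduct_smul, smul_eq_mul]

end Matrix

lemma le_of_eq_mul_of_quadratic_bounds {a b w lam C D e γ : ℝ} (hC : 0 ≤ C) (hD : 0 ≤ D)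
    (he : 0 ≤ e) (hγ : 0 ≤ γ) (hba : b ≤ C * a) (hwa : w ≤ D * a) (hbw : e * b ≤ w)
    (hpos : 0 < a + γ * w) (hlam : b + γ * w = lam * (a + γ * w)) :
    lam ≤ C / (1 + γ * C * e) + γ * D / (1 + γ * D) := by
  have hb : b ≤ C / (1 + γ * C * e) * (a + γ * w) := by
    rw [div_mul_eq_mul_div, le_div_iff₀ (by positivity)]
    nlinarith [mul_le_mul_of_nonneg_left hbw (mul_nonneg hγ hC)]
  have hw : γ * w ≤ γ * D / (1 + γ * D) * (a + γ * w) := by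
    rw [div_mul_eq_mul_div, le_div_iff₀ (by positivity)]
    nlinarith [mul_le_mul_of_nonneg_left hwa hγ]
  refine le_of_mul_le_mul_right ?_ hpos
  linarith

/-- Upper eigenvalue bound for `Shatγ⁻¹ * Sγ` (Lemma 3.1, upper bound, first term). -/
theorem stmt_2 {n : ℕ} (S Shat W : Matrix (Fin n) (Fin n) ℝ)
    (hS : S.PosDef) (hShat : Shat.PosDef) (hW : W.PosDef)
    (C D e : ℝ) (hC : 0 < C) (hD : 0 < D) (he : 0 < e)
    (h1 : ∀ x : Fin n → ℝ, x ⬝ᵥ S.mulVec x ≤ C * (x ⬝ᵥ Shat.mulVec x))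
    (h2 : ∀ x : Fin n → ℝ, x ⬝ᵥ S.mulVec x ≤ D * (x ⬝ᵥ W.mulVec x))
    (h3 : ∀ x : Fin n → ℝ, e * (x ⬝ᵥ W.mulVec x) ≤ x ⬝ᵥ Shat.mulVec x)
    (γ : ℝ) (hγ : 0 ≤ γ)
    (Sγ Shatγ : Matrix (Fin n) (Fin n) ℝ)
    (hSγ : Sγ = (S⁻¹ + γ • W⁻¹)⁻¹) (hShatγ : Shatγ = (Shat⁻¹ + γ • W⁻¹)⁻¹)
    (lam : ℝ) (x : Fin n → ℝ) (hx : x ≠ 0)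
    (heig : (Shatγ⁻¹ * Sγ).mulVec x = lam • x) :
    lam ≤ C / (1 + γ * C * e) + γ * D / (1 + γ * D) := by
  have hM := hS.inv.add_posSemidef (hW.inv.posSemidef.smul hγ)
  have hN := hShat.inv.add_posSemidef (hW.inv.posSemidef.smul hγ)
  rw [hShatγ, hSγ, nonsing_inv_nonsing_inv _ hN.det_pos.ne'.isUnit] at heig
  have hray := dotProduct_mulVec_eq_of_mul_inv_mulVec_eq hM.det_pos.ne'.isUnit heig
  set z := (S⁻¹ + γ • W⁻¹)⁻¹ *ᵥ x
  have hMz : (S⁻¹ + γ • W⁻¹) *ᵥ z = x := mulVec_inv_mulVec hM.det_pos.ne'.isUnit x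
  have hz : z ≠ 0 := fun hz => hx <| by rw [← hMz, hz, mulVec_zero]
  have hpos := hM.dotProduct_mulVec_pos hz
  simp only [star_trivial, add_mulVec, smul_mulVec, dotProduct_add, dotProduct_smul,
    smul_eq_mul] at hray hpos
  refine le_of_eq_mul_of_quadratic_bounds hC.le hD.le he.le hγ ?_ ?_ ?_ hpos hray
  · simpa using hS.smul_dotProduct_inv_mulVec_anti hShat one_pos hC (by simpa using h1) z
  · simpa using hS.smul_dotProduct_inv_mulVec_anti hW one_pos hD (by simpa using h2) z
  · simpa using hW.smul_dotProduct_inv_mulVec_anti hShat he one_pos (by simpa using h3) z
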